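/- arXiv:1005.3701 — 8 statements merged into one kernel-verified Lean document; each statement's English description precedes it below -/
import Mathlib

section
/- Composition of linear operations is commutative: for all integer pairs (a_1,b_1), (a_2,b_2) and any X ⊆ ℤ, Γ_{a_2,b_2}(Γ_{a_1,b_1}(X)) = Γ_{a_1,b_1}(Γ_{a_2,b_2}(X)). -/
/-- The linear operation `Γ_{a,b}(X) = aX + bX = {a x + b x' : x, x' ∈ X}`. -/
def Gamma (a b : ℤ) (X : Set ℤ) : Set ℤ :=
  {z | ∃ x ∈ X, ∃ y ∈ X, z = a * x + b * y}

/- Transpose the 2×2 array of points: `a₂ (a₁ x₁ + b₁ y₁) + b₂ (a₁ x₂ + b₁ y₂)`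
equals `a₁ (a₂ x₁ + b₂ x₂) + b₁ (a₂ y₁ + b₂ y₂)`. -/
theorem Gamma_Gamma_subset (a₁ b₁ a₂ b₂ : ℤ) (X : Set ℤ) :
    Gamma a₂ b₂ (Gamma a₁ b₁ X) ⊆ Gamma a₁ b₁ (Gamma a₂ b₂ X) := by
  rintro _ ⟨_, ⟨x₁, hx₁, y₁, hy₁, rfl⟩, _, ⟨x₂, hx₂, y₂, hy₂, rfl⟩, rfl⟩
  exact ⟨_, ⟨x₁, hx₁, x₂, hx₂, rfl⟩, _, ⟨y₁, hy₁, y₂, hy₂, rfl⟩, by ring⟩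

theorem composition_comm (a₁ b₁ a₂ b₂ : ℤ) (X : Set ℤ) :
    Gamma a₂ b₂ (Gamma a₁ b₁ X) = Gamma a₁ b₁ (Gamma a₂ b₂ X) :=
  (Gamma_Gamma_subset a₁ b₁ a₂ b₂ X).antisymm (Gamma_Gamma_subset a₂ b₂ a₁ b₁ X)
end

section
/- Let a, b ≥ 1 be coprime integers with a > b + 1 and a > b, and let X = {abm + 1 : m ∈ ℕ}. Then for every k ≥ 1, the k-th iterate of the operation Γ(Y) = aY - bY applied to X equals {abm + (a-b)^k : m ∈ ℤ}, and consequently the sequence of iterates Γ_k(X) is never eventually constant. -/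
/-- `Γ(Y) = aY - bY = {a y - b y' : y, y' ∈ Y}`. -/
def GammaDiff (a b : ℤ) (Y : Set ℤ) : Set ℤ :=
  {z | ∃ y ∈ Y, ∃ y' ∈ Y, z = a * y - b * y'}

/-- Iterates of `Γ`: `Γ_0(X) = X`, `Γ_{k+1}(X) = Γ(Γ_k(X))`. -/
def GammaDiffIter (a b : ℤ) : ℕ → Set ℤ → Set ℤ
  | 0, X => X
  | k + 1, X => GammaDiff a b (GammaDiffIter a b k X)

/-!
Every element of `ab ℤ + c` lies in `Γ(ab ℕ + c)`: since `a, b` are coprime and positive,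
every integer is `a m - b m'` with `m, m' ∈ ℕ`, and `a (ab m + c) - b (ab m' + c) =
ab (a m - b m') + (a - b) c`. Hence `Γ` maps the class of `c` modulo `ab` to the class of
`(a - b) c`, and `Γ_k(X)` is the class of `(a - b)^k`. Two consecutive iterates agree only if
`ab ∣ (a - b)^k (a - b - 1)`; as `a - b` is prime to `ab`, this forces `ab ∣ a - b - 1`,
impossible since `0 < a - b - 1 < ab`.
-/

def residueClass (n c : ℤ) : Set ℤ := {z | ∃ m : ℤ, z = n * m + c}

theorem residueClass_eq_iff {n c d : ℤ} : residueClass n c = residueClass n d ↔ n ∣ c - d := by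
  constructor
  · intro h
    obtain ⟨m, hm⟩ : c ∈ residueClass n d := h ▸ ⟨0, by ring⟩
    exact ⟨m, by linarith⟩
  · rintro ⟨m, hm⟩
    ext z
    constructor
    · rintro ⟨l, rfl⟩; exact ⟨l + m, by linear_combination hm⟩
    · rintro ⟨l, rfl⟩; exact ⟨l - m, by linear_combination -hm⟩

theorem IsCoprime.exists_nat_mul_sub_mul_eq {a b : ℤ} (hab : IsCoprime a b) (ha : 0 < a)
    (hb : 0 < b) (n : ℤ) : ∃ m m' : ℕ, a * m - b * m' = n := by
  obtain ⟨u, v, huv⟩ := hab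
  -- shift the Bézout solution `(n u, -n v)` along the kernel direction `(b, a)`
  set t := |n * u| + |n * v|
  have hp : 0 ≤ n * u + b * t := by
    nlinarith [neg_abs_le (n * u), abs_nonneg (n * v), abs_nonneg (n * u)]
  have hq : 0 ≤ -(n * v) + a * t := by
    nlinarith [neg_abs_le (-(n * v)), abs_neg (n * v), abs_nonneg (n * v), abs_nonneg (n * u)]
  refine ⟨(n * u + b * t).toNat, (-(n * v) + a * t).toNat, ?_⟩
  rw [Int.toNat_of_nonneg hp, Int.toNat_of_nonneg hq]
  linear_combination n * huv

section
variable {a b c : ℤ}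

theorem gammaDiff_eq_residueClass {X : Set ℤ} (hX : X ⊆ residueClass (a * b) c)
    (hrep : ∀ n, ∃ m m', a * b * m + c ∈ X ∧ a * b * m' + c ∈ X ∧ a * m - b * m' = n) :
    GammaDiff a b X = residueClass (a * b) ((a - b) * c) := by
  ext z
  constructor
  · rintro ⟨y, hy, y', hy', rfl⟩
    obtain ⟨m, rfl⟩ := hX hy
    obtain ⟨m', rfl⟩ := hX hy'
    exact ⟨a * m - b * m', by ring⟩
  · rintro ⟨n, rfl⟩
    obtain ⟨m, m', hm, hm', hmm'⟩ := hrep n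
    exact ⟨_, hm, _, hm', by linear_combination (-(a * b)) * hmm'⟩

theorem gammaDiff_residueClass (hab : IsCoprime a b) :
    GammaDiff a b (residueClass (a * b) c) = residueClass (a * b) ((a - b) * c) := by
  refine gammaDiff_eq_residueClass subset_rfl fun n => ?_
  obtain ⟨u, v, huv⟩ := hab
  exact ⟨n * u, -(n * v), ⟨_, rfl⟩, ⟨_, rfl⟩, by linear_combination n * huv⟩

theorem gammaDiff_natProgression (hab : IsCoprime a b) (ha : 0 < a) (hb : 0 < b) :
    GammaDiff a b {z | ∃ m : ℕ, z = a * b * m + c} = residueClass (a * b) ((a - b) * c) := by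
  refine gammaDiff_eq_residueClass (fun z ⟨m, hm⟩ => ⟨m, hm⟩) fun n => ?_
  obtain ⟨m, m', h⟩ := hab.exists_nat_mul_sub_mul_eq ha hb n
  exact ⟨m, m', ⟨m, rfl⟩, ⟨m', rfl⟩, h⟩

theorem gammaDiffIter_natProgression (hab : IsCoprime a b) (ha : 0 < a) (hb : 0 < b)
    {k : ℕ} (hk : 1 ≤ k) :
    GammaDiffIter a b k {z | ∃ m : ℕ, z = a * b * m + 1} = residueClass (a * b) ((a - b) ^ k) := by
  induction k, hk using Nat.le_induction with
  | base => simpa [GammaDiffIter] using gammaDiff_natProgression (c := 1) hab ha hb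
  | succ k _ ih => rw [GammaDiffIter, ih, gammaDiff_residueClass hab, pow_succ', mul_comm]

theorem not_mul_dvd_pow_succ_sub_pow (hab : IsCoprime a b) (hb : 0 < b) (hba : b + 1 < a)
    (k : ℕ) : ¬ a * b ∣ (a - b) ^ (k + 1) - (a - b) ^ k := by
  intro h
  have hcop : IsCoprime (a * b) ((a - b) ^ k) := by
    refine IsCoprime.pow_right (IsCoprime.mul_left ?_ ?_)
    · simpa using IsCoprime.mul_sub_left_right_iff (z := 1) |>.mpr hab
    · simpa using IsCoprime.sub_mul_left_right_iff (z := 1) |>.mpr hab.symm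
  have hdvd : a * b ∣ a - b - 1 :=
    hcop.dvd_of_dvd_mul_left (by rwa [pow_succ, ← mul_sub_one] at h)
  have := Int.le_of_dvd (by omega) hdvd
  nlinarith
end

theorem iterates_of_progression_not_stable (a b : ℤ) (hb : 1 ≤ b) (hba : b < a)
    (hne : a ≠ b + 1) (hcop : IsCoprime a b) :
    (∀ k : ℕ, 1 ≤ k →
      GammaDiffIter a b k {z : ℤ | ∃ m : ℕ, z = a * b * m + 1} =
        {z : ℤ | ∃ m : ℤ, z = a * b * m + (a - b) ^ k}) ∧
    ¬ ∃ K : ℕ, ∀ k ≥ K,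
      GammaDiffIter a b (k + 1) {z : ℤ | ∃ m : ℕ, z = a * b * m + 1} =
        GammaDiffIter a b k {z : ℤ | ∃ m : ℕ, z = a * b * m + 1} := by
  have hiter := fun k => gammaDiffIter_natProgression (k := k) hcop (by omega) (by omega)
  refine ⟨hiter, ?_⟩
  rintro ⟨K, hK⟩
  have hstable := hK (K + 1) (by omega)
  rw [hiter (K + 2) (by omega), hiter (K + 1) (by omega), residueClass_eq_iff] at hstable
  exact not_mul_dvd_pow_succ_sub_pow hcop (by omega) (by omega) _ hstable
end

section
/- Let X ⊆ ℕ with 0 ∈ X, gcd of all elements of X equal to 1, and upper density d̄(X) > 1/2. Then d̄(X + X) ≥ (1 + d̄(X))/2. -/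
open scoped Classical

/-- Upper density of a set of natural numbers. -/
noncomputable def upperDensity (A : Set ℕ) : ℝ :=
  Filter.atTop.limsup fun n => (((Finset.Icc 1 n).filter fun m => m ∈ A).card : ℝ) / n

/-!
If `A ⊆ [0, l]` contains `0` and `l` and `2|A| ≥ l + 3`, then for every `m ≤ l` one of `m`,
`m + l` lies in `A + A`: otherwise reflecting `A ∩ [0, m]` about `m/2` and `A ∩ [m, l]` about
`(m + l)/2` would show `2|A| ≤ l + 2`. Counting `A + A` in `[0, l)` and in `[l, 2l]` then gives
`|A + A| ≥ l + |A|`. Applied to `A = {0} ∪ (X ∩ [1, n])` with `l = max A`, at scales `n` where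
the proportion of `X` in `[1, n]` exceeds `1/2`, this yields
`|(X + X) ∩ [1, 2l]| / 2l ≥ 1/2 + |X ∩ [1, n]| / 2n` with `2l > n`.
-/

open Finset Filter
open scoped Pointwise

lemma two_mul_card_inter_Icc_le_of_add_notMem_add {A : Finset ℕ} {u v : ℕ}
    (h : u + v ∉ A + A) : 2 * #(A ∩ Icc u v) ≤ v + 1 - u := by
  set C := A ∩ Icc u v
  have hC : ∀ a ∈ C, a ∈ A ∧ u ≤ a ∧ a ≤ v := fun a ha =>
    ⟨(mem_inter.1 ha).1, mem_Icc.1 (mem_inter.1 ha).2⟩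
  set R := C.image (u + v - ·)
  have hR : #R = #C := card_image_of_injOn fun a ha b hb hab => by
    have := hC a ha; have := hC b hb; have : u + v - a = u + v - b := hab; omega
  have hdisj : Disjoint C R := by
    refine disjoint_left.2 fun x hx hxR => h ?_
    obtain ⟨a, ha, rfl⟩ := mem_image.1 hxR
    have := hC a ha
    exact mem_add.2 ⟨_, (hC _ hx).1, a, this.1, by omega⟩
  have hsub : C ∪ R ⊆ Icc u v := by
    intro x hx
    rcases mem_union.1 hx with hx | hx
    · have := hC x hx; exact mem_Icc.2 ⟨this.2.1, this.2.2⟩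
    · obtain ⟨a, ha, rfl⟩ := mem_image.1 hx
      have := hC a ha; exact mem_Icc.2 ⟨by omega, by omega⟩
  have := card_le_card hsub
  rw [card_union_of_disjoint hdisj, hR, Nat.card_Icc] at this
  omega

lemma mem_add_or_add_mem_add {A : Finset ℕ} {l m : ℕ} (hA : ∀ a ∈ A, a ≤ l)
    (hcard : l + 3 ≤ 2 * #A) (hm : m ≤ l) : m ∈ A + A ∨ m + l ∈ A + A := by
  by_contra! h
  have hlow :=
    two_mul_card_inter_Icc_le_of_add_notMem_add (u := 0) (v := m) (by simpa using h.1)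
  have hhigh := two_mul_card_inter_Icc_le_of_add_notMem_add (u := m) (v := l) h.2
  have hcover : A ⊆ A ∩ Icc 0 m ∪ A ∩ Icc m l := fun a ha => by
    rcases le_total a m with ham | hma
    · exact mem_union_left _ (mem_inter.2 ⟨ha, mem_Icc.2 ⟨a.zero_le, ham⟩⟩)
    · exact mem_union_right _ (mem_inter.2 ⟨ha, mem_Icc.2 ⟨hma, hA a ha⟩⟩)
  have := (card_le_card hcover).trans (card_union_le _ _)
  omega

lemma add_card_le_card_add_self {A : Finset ℕ} {l : ℕ} (h0 : 0 ∈ A) (hl : l ∈ A)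
    (hA : ∀ a ∈ A, a ≤ l) (hcard : l + 3 ≤ 2 * #A) : l + #A ≤ #(A + A) := by
  set B := A + A
  set B₁ := (range l).filter (· ∈ B)
  set B₂ := (range l).filter (· + l ∈ B)
  have hunion : B₁ ∪ B₂ = range l := by
    ext x
    simp only [B₁, B₂, mem_union, mem_filter, ← and_or_left, and_iff_left_iff_imp, mem_range]
    exact fun hx => mem_add_or_add_mem_add hA hcard hx.le
  have hinter : A.erase l ⊆ B₁ ∩ B₂ := fun a ha => by
    have haA := mem_of_mem_erase ha
    have hal : a < l := lt_of_le_of_ne (hA a haA) (ne_of_mem_erase ha)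
    simp only [B₁, B₂, mem_inter, mem_filter, mem_range]
    exact ⟨⟨hal, mem_add.2 ⟨a, haA, 0, h0, rfl⟩⟩, hal, mem_add.2 ⟨a, haA, l, hl, rfl⟩⟩
  have hlower : l + #A ≤ #B₁ + #B₂ + 1 := by
    have hsum := card_union_add_card_inter B₁ B₂
    have hcap := card_le_card hinter
    rw [hunion, card_range] at hsum
    rw [card_erase_of_mem hl] at hcap
    omega
  -- `B₁ ⊆ [0, l)` and the shifted copy of `B₂ ∪ {l}` lies in `[l, 2l]`.
  set U := (insert l B₂).image (· + l)
  have hU : #U = #B₂ + 1 := by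
    rw [card_image_of_injective _ (add_left_injective l), card_insert_of_notMem]
    simp [B₂]
  have hsub : B₁ ∪ U ⊆ B := by
    intro x hx
    simp only [B₁, U, mem_union, mem_filter, mem_image, mem_insert, B₂] at hx
    rcases hx with ⟨-, hx⟩ | ⟨y, rfl | ⟨-, hy⟩, rfl⟩
    exacts [hx, mem_add.2 ⟨y, hl, y, hl, rfl⟩, hy]
  have hdisj : Disjoint B₁ U := by
    refine disjoint_left.2 fun x hx hxU => ?_
    obtain ⟨y, -, rfl⟩ := mem_image.1 hxU
    have := mem_range.1 (mem_filter.1 hx).1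
    omega
  have := card_le_card hsub
  rw [card_union_of_disjoint hdisj, hU] at this
  omega

lemma exists_add_card_le_card_filter_add {X : Set ℕ} (h0 : 0 ∈ X) {n : ℕ}
    (hn : n < 2 * #{m ∈ Icc 1 n | m ∈ X}) :
    ∃ l ≤ n, #{m ∈ Icc 1 n | m ∈ X} ≤ l ∧
      l + #{m ∈ Icc 1 n | m ∈ X} ≤ #{m ∈ Icc 1 (2 * l) | m ∈ X + X} := by
  set F := {m ∈ Icc 1 n | m ∈ X}
  have hF : ∀ a ∈ F, 1 ≤ a ∧ a ≤ n ∧ a ∈ X := fun a ha => by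
    simp only [F, mem_filter, mem_Icc] at ha; exact ⟨ha.1.1, ha.1.2, ha.2⟩
  have hne : F.Nonempty := card_pos.1 (by omega)
  set l := F.max' hne
  have hlF := hF l (F.max'_mem hne)
  have hFl : F ⊆ Icc 1 l := fun a ha => mem_Icc.2 ⟨(hF a ha).1, F.le_max' a ha⟩
  set A := insert 0 F
  have hAcard : #A = #F + 1 := card_insert_of_notMem fun h => by have := hF 0 h; omega
  have hA : ∀ a ∈ A, a ≤ l := by
    simp only [A, forall_mem_insert]; exact ⟨l.zero_le, fun a ha => (mem_Icc.1 (hFl ha)).2⟩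
  have hFcard : #F ≤ l := by simpa using card_le_card hFl
  have hkey : l + #A ≤ #(A + A) :=
    add_card_le_card_add_self (mem_insert_self 0 F) (mem_insert_of_mem (F.max'_mem hne)) hA
      (by omega)
  have hAX : (A : Set ℕ) ⊆ X := by
    simp only [A, coe_insert, Set.insert_subset_iff]
    exact ⟨h0, fun a ha => (hF a ha).2.2⟩
  have hsub : (A + A).erase 0 ⊆ {m ∈ Icc 1 (2 * l) | m ∈ X + X} := by
    intro x hx
    obtain ⟨a, ha, b, hb, rfl⟩ := mem_add.1 (mem_of_mem_erase hx)
    have := hA a ha; have := hA b hb; have := ne_of_mem_erase hx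
    exact mem_filter.2 ⟨mem_Icc.2 ⟨by omega, by omega⟩, Set.add_mem_add (hAX ha) (hAX hb)⟩
  have := card_le_card hsub
  have h00 : 0 ∈ A + A := mem_add.2 ⟨0, mem_insert_self 0 F, 0, mem_insert_self 0 F, rfl⟩
  rw [card_erase_of_mem h00] at this
  exact ⟨l, hlF.2.1, hFcard, by omega⟩

noncomputable def densityRatio (A : Set ℕ) (n : ℕ) : ℝ :=
  (#{m ∈ Icc 1 n | m ∈ A} : ℝ) / n

lemma densityRatio_le_one (A : Set ℕ) (n : ℕ) : densityRatio A n ≤ 1 := by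
  refine div_le_one_of_le₀ ?_ n.cast_nonneg
  exact_mod_cast (card_filter_le _ _).trans (by simp)

lemma frequently_lt_densityRatio {A : Set ℕ} {c : ℝ} (h : c < upperDensity A) :
    ∃ᶠ n in atTop, c < densityRatio A n :=
  frequently_lt_of_lt_limsup (IsCoboundedUnder.of_frequently_ge
    (Frequently.of_forall fun n => by unfold densityRatio; positivity)) h

lemma le_upperDensity_of_frequently {A : Set ℕ} {c : ℝ}
    (h : ∃ᶠ n in atTop, c ≤ densityRatio A n) : c ≤ upperDensity A :=
  le_limsup_of_frequently_le h (isBoundedUnder_of ⟨1, densityRatio_le_one A⟩)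

lemma exists_densityRatio_add_self_ge {X : Set ℕ} (h0 : 0 ∈ X) {n : ℕ}
    (hn : 1 / 2 < densityRatio X n) :
    ∃ N > n, (1 + densityRatio X n) / 2 ≤ densityRatio (X + X) N := by
  set c := #{m ∈ Icc 1 n | m ∈ X}
  have hn0 : 0 < n := Nat.pos_of_ne_zero fun h => by
    simp only [densityRatio, h, Nat.cast_zero, div_zero] at hn; norm_num at hn
  have hnR : (0 : ℝ) < n := by exact_mod_cast hn0
  have hc : n < 2 * c := by
    have : (1 / 2 : ℝ) < c / n := hn
    rw [lt_div_iff₀ hnR] at this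
    exact_mod_cast (by linarith : (n : ℝ) < 2 * c)
  obtain ⟨l, hln, hcl, hcount⟩ := exists_add_card_le_card_filter_add h0 hc
  have hlR : (0 : ℝ) < l := by exact_mod_cast (by omega : 0 < l)
  refine ⟨2 * l, by omega, ?_⟩
  calc (1 + densityRatio X n) / 2 = (1 + c / n) / 2 := rfl
    _ ≤ (1 + c / l) / 2 := by gcongr
    _ = (l + c) / (2 * l) := by field_simp
    _ ≤ densityRatio (X + X) (2 * l) := by
      unfold densityRatio; push_cast; gcongr; exact_mod_cast hcount

theorem sumset_density_large_general (X : Set ℕ) (h0 : 0 ∈ X)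
    (hgt : 1 / 2 < upperDensity X) :
    (1 + upperDensity X) / 2 ≤ upperDensity {n : ℕ | ∃ x ∈ X, ∃ y ∈ X, n = x + y} := by
  have hS : {n : ℕ | ∃ x ∈ X, ∃ y ∈ X, n = x + y} = X + X := by
    ext; simp [Set.mem_add, eq_comm]
  rw [hS]
  refine le_of_forall_pos_le_add fun ε hε => ?_
  suffices (1 + upperDensity X - ε) / 2 ≤ upperDensity (X + X) by linarith
  have hfreq := frequently_lt_densityRatio (max_lt (sub_lt_self (upperDensity X) hε) hgt)
  refine le_upperDensity_of_frequently (frequently_atTop.2 fun M => ?_)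
  obtain ⟨n, hnM, hn⟩ := frequently_atTop.1 hfreq M
  obtain ⟨N, hnN, hN⟩ := exists_densityRatio_add_self_ge h0 (max_lt_iff.1 hn).2
  exact ⟨N, by omega, by linarith [(max_lt_iff.1 hn).1]⟩

theorem sumset_density_large (X : Set ℕ) (h0 : 0 ∈ X)
    (hgcd : ∀ d : ℕ, (∀ x ∈ X, d ∣ x) → d = 1)
    (hgt : 1 / 2 < upperDensity X) :
    (1 + upperDensity X) / 2 ≤ upperDensity {n : ℕ | ∃ x ∈ X, ∃ y ∈ X, n = x + y} :=
  sumset_density_large_general X h0 hgt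
end

section
/- Let X ⊆ ℕ and a ≥ b ≥ 1 be integers with d̄(X) > a/(a+1). Then the gaps of the set aX - bX are bounded by a: for every n ∈ aX - bX there exists n' ∈ aX - bX with 1 ≤ n' - n ≤ a. The same holds for the set bX - aX. -/
/-!
Write `n = a x - b y` and look for `n' = a (x + ψ j) - b (y + j)` with `ψ j = ⌊(b j + c) / a⌋`,
so that `n' - n = a ψ j - b j ∈ (c - a, c]`; `c = a` handles `aX - bX` and `c = -1` handles
`bX - aX = -(aX - bX)`. It remains to find `j ≥ 1` with `y + j ∈ X` and `x + ψ j ∈ X`.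
If there is none, then up to `n` there are about `|X ∩ [1, n]|` indices `j` with `y + j ∈ X`;
since `b ≤ a`, `ψ` takes each value on fewer than `a` consecutive indices and grows at most
like `j + 1`, so these `j` give at least `|X ∩ [1, n]| / a` numbers `x + ψ j ≤ n` outside `X`.
Hence `(a + 1) |X ∩ [1, n]| ≤ a n + O(1)`, contradicting `d̄(X) > a / (a + 1)`.
-/

open scoped Classical

open Filter Finset

noncomputable def countUpTo (A : Set ℕ) (n : ℕ) : ℕ := #{m ∈ Icc 1 n | m ∈ A}

lemma frequently_lt_countUpTo (A : Set ℕ) {c : ℝ} (hc : c < upperDensity A) :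
    ∃ᶠ n in atTop, c * n < countUpTo A n := by
  have hbdd : IsBoundedUnder (· ≥ ·) atTop fun n : ℕ => (countUpTo A n : ℝ) / n :=
    isBoundedUnder_of ⟨0, fun n => by positivity⟩
  refine ((frequently_lt_of_lt_limsup hbdd.isCoboundedUnder_le hc).and_eventually
    (eventually_gt_atTop 0)).mono fun n ⟨hcn, hn⟩ => ?_
  exact (lt_div_iff₀ (by exact_mod_cast hn)).mp hcn

lemma exists_add_lt_mul_countUpTo (A : Set ℕ) (a : ℕ) (hd : (a : ℝ) / (a + 1) < upperDensity A)
    (K N : ℕ) : ∃ n ≥ N, a * n + K < (a + 1) * countUpTo A n := by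
  obtain ⟨c, hac, hc⟩ := exists_between hd
  set δ : ℝ := (a + 1) * c - a
  have hδ : 0 < δ := by rw [div_lt_iff₀ (by positivity)] at hac; linarith
  obtain ⟨n, hn, hcn⟩ :=
    (frequently_lt_countUpTo A hc).forall_exists_of_atTop (max N (⌈K / δ⌉₊ + 1))
  refine ⟨n, le_of_max_le_left hn, ?_⟩
  have hKn : K < δ * n := by
    have h : K / δ < n := (Nat.le_ceil _).trans_lt (by exact_mod_cast le_of_max_le_right hn)
    rwa [div_lt_iff₀ hδ, mul_comm] at h
  have : (a * n + K : ℝ) < (a + 1) * countUpTo A n := by nlinarith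
  exact_mod_cast this

lemma card_le_of_forall_le_lt_add {t : Finset ℕ} {a : ℕ}
    (ht : ∀ i ∈ t, ∀ j ∈ t, i ≤ j → j < i + a) : #t ≤ a := by
  rcases t.eq_empty_or_nonempty with rfl | hne
  · simp
  calc #t ≤ #(Ico (t.min' hne) (t.min' hne + a)) :=
        card_le_card fun j hj => mem_Ico.mpr
          ⟨t.min'_le j hj, ht _ (t.min'_mem hne) j hj (t.min'_le j hj)⟩
    _ = a := by simp

lemma countUpTo_add_add_le (X : Set ℕ) (v M w : ℕ) :
    countUpTo X (v + M + w) ≤ #{j ∈ Icc 1 M | v + j ∈ X} + (v + w) := by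
  have hsub : {m ∈ Icc 1 (v + M + w) | m ∈ X} ⊆
      Icc 1 v ∪ ({j ∈ Icc 1 M | v + j ∈ X}.image (v + ·)) ∪ Icc (v + M + 1) (v + M + w) := by
    intro m hm
    simp only [mem_filter, mem_Icc] at hm
    simp only [mem_union, mem_Icc, mem_image, mem_filter]
    by_cases h : v < m ∧ m ≤ v + M
    · refine Or.inl (Or.inr ⟨m - v, ⟨⟨by omega, by omega⟩, ?_⟩, by omega⟩)
      rw [Nat.add_sub_cancel' h.1.le]
      exact hm.2
    · omega
  calc countUpTo X (v + M + w) ≤ #(Icc 1 v ∪ ({j ∈ Icc 1 M | v + j ∈ X}.image (v + ·)) ∪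
        Icc (v + M + 1) (v + M + w)) := card_le_card hsub
    _ ≤ v + #{j ∈ Icc 1 M | v + j ∈ X} + w := by
        grw [card_union_le, card_union_le, card_image_le]
        simp
    _ = _ := by ring

lemma add_one_mul_countUpTo_le (X : Set ℕ) (a : ℕ) (ψ : ℕ → ℕ) (hψ : ∀ j, ψ j ≤ j + 1)
    (hfib : ∀ i j, 1 ≤ i → ψ i = ψ j → i ≤ j → j < i + a) (u v M : ℕ)
    (hX : ∀ j ∈ Icc 1 M, v + j ∈ X → u + ψ j ∉ X) :
    (a + 1) * countUpTo X (v + M + (u + 2)) ≤ a * (v + M + (u + 2)) + (a + u + v + 2) := by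
  set n := v + M + (u + 2)
  set S := {j ∈ Icc 1 M | v + j ∈ X}
  set H := {m ∈ Icc 1 n | m ∉ X}
  have hwindow : countUpTo X n ≤ #S + (v + (u + 2)) := countUpTo_add_add_le X v M (u + 2)
  have hfibre : #S ≤ a * #(S.image ψ) := card_le_mul_card_image S a fun k _ =>
    card_le_of_forall_le_lt_add fun i hi j hj hij => by
      simp only [S, mem_filter] at hi hj
      exact hfib i j (mem_Icc.mp hi.1.1).1 (hi.2.trans hj.2.symm) hij
  have himage : #(S.image ψ) ≤ #H + 1 := by
    refine (card_le_card_of_injOn (u + ·) ?_ (add_right_injective u).injOn).trans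
      (card_insert_le u H)
    intro k hk
    obtain ⟨j, hj, rfl⟩ := mem_image.mp (mem_coe.mp hk)
    simp only [S, mem_filter, mem_Icc] at hj
    have := hψ j
    simp only [coe_insert, Set.mem_insert_iff, mem_coe, H, mem_filter, mem_Icc]
    by_cases h0 : ψ j = 0
    · simp [h0]
    · exact Or.inr ⟨⟨by omega, by omega⟩, hX j (mem_Icc.mpr hj.1) hj.2⟩
  have hsplit : countUpTo X n + #H = n := by
    simpa [countUpTo, H] using card_filter_add_card_filter_not (s := Icc 1 n) (· ∈ X)
  nlinarith

theorem exists_add_mem_and_add_mem (X : Set ℕ) (a : ℕ)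
    (hd : (a : ℝ) / (a + 1) < upperDensity X) (ψ : ℕ → ℕ) (hψ : ∀ j, ψ j ≤ j + 1)
    (hfib : ∀ i j, 1 ≤ i → ψ i = ψ j → i ≤ j → j < i + a) (u v : ℕ) :
    ∃ j, 1 ≤ j ∧ v + j ∈ X ∧ u + ψ j ∈ X := by
  by_contra! hX
  obtain ⟨n, hn, hcount⟩ := exists_add_lt_mul_countUpTo X a hd (a + u + v + 2) (u + v + 2)
  obtain ⟨M, rfl⟩ : ∃ M, n = v + M + (u + 2) := ⟨n - (u + v + 2), by omega⟩
  have := add_one_mul_countUpTo_le X a ψ hψ hfib u v M fun j hj => hX j (mem_Icc.mp hj).1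
  omega

def floorShift (a b : ℕ) (c : ℤ) (j : ℕ) : ℕ := ((b * j + c) / a).toNat

section floorShift

variable {a b i j : ℕ} {c : ℤ}

lemma floorShift_cast (hcb : -b ≤ c) (hj : 1 ≤ j) :
    (floorShift a b c j : ℤ) = (b * j + c) / a := by
  have : (b : ℤ) ≤ b * j := le_mul_of_one_le_right (by positivity) (by exact_mod_cast hj)
  exact Int.toNat_of_nonneg (Int.ediv_nonneg (by omega) (by positivity))

lemma floorShift_le (ha : 0 < a) (hba : b ≤ a) (hca : c ≤ a) (j : ℕ) :
    floorShift a b c j ≤ j + 1 := by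
  have : (b : ℤ) * j ≤ a * j := mul_le_mul_of_nonneg_right (by exact_mod_cast hba) (by positivity)
  have hq : (b * j + c) / a ≤ (a * (j + 1) : ℤ) / a :=
    Int.ediv_le_ediv (by positivity) (by linarith)
  rw [Int.mul_ediv_cancel_left _ (by positivity)] at hq
  exact_mod_cast Int.toNat_le.mpr hq

lemma sub_floorShift_mem_Ioc (ha : 0 < a) (hcb : -b ≤ c) (hj : 1 ≤ j) :
    a * (floorShift a b c j : ℤ) - b * j ∈ Set.Ioc (c - a) c := by
  rw [floorShift_cast hcb hj]
  have := Int.emod_add_mul_ediv (b * j + c) a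
  have := Int.emod_nonneg (b * j + c) (by positivity : (a : ℤ) ≠ 0)
  have := Int.emod_lt_of_pos (b * j + c) (by positivity : (0 : ℤ) < a)
  constructor <;> linarith

lemma lt_add_of_floorShift_eq (ha : 0 < a) (hb : 1 ≤ b) (hcb : -b ≤ c) (hi : 1 ≤ i)
    (h : floorShift a b c i = floorShift a b c j) (hij : i ≤ j) : j < i + a := by
  obtain ⟨-, hi'⟩ := sub_floorShift_mem_Ioc ha hcb hi
  obtain ⟨hj', -⟩ := sub_floorShift_mem_Ioc ha hcb (hi.trans hij)
  rw [h] at hi'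
  have : (i : ℤ) ≤ j := by exact_mod_cast hij
  have : (j - i : ℤ) ≤ b * (j - i) := le_mul_of_one_le_left (by omega) (by exact_mod_cast hb)
  have : (j : ℤ) < i + a := by nlinarith
  exact_mod_cast this

end floorShift

theorem exists_sub_mem_Ioc (X : Set ℕ) (a b : ℕ) (c : ℤ) (hb : 1 ≤ b) (hba : b ≤ a)
    (hcb : -b ≤ c) (hca : c ≤ a) (hd : (a : ℝ) / (a + 1) < upperDensity X) (x y : ℕ) :
    ∃ x' ∈ X, ∃ y' ∈ X, (a * x' - b * y' : ℤ) - (a * x - b * y) ∈ Set.Ioc (c - a) c := by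
  have ha : 0 < a := by omega
  obtain ⟨j, hj, hyj, hxj⟩ := exists_add_mem_and_add_mem X a hd (floorShift a b c)
    (floorShift_le ha hba hca) (fun _ _ hi h hij => lt_add_of_floorShift_eq ha hb hcb hi h hij) x y
  obtain ⟨h1, h2⟩ := sub_floorShift_mem_Ioc ha hcb hj
  refine ⟨_, hxj, _, hyj, ?_, ?_⟩ <;> push_cast <;> linarith

theorem gaps_bounded_of_large_density (X : Set ℕ) (a b : ℤ) (hb : 1 ≤ b) (hba : b ≤ a)
    (hd : (a : ℝ) / (a + 1) < upperDensity X) :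
    (∀ n ∈ {z : ℤ | ∃ x ∈ X, ∃ y ∈ X, z = a * x - b * y},
      ∃ n' ∈ {z : ℤ | ∃ x ∈ X, ∃ y ∈ X, z = a * x - b * y}, 1 ≤ n' - n ∧ n' - n ≤ a) ∧
    (∀ n ∈ {z : ℤ | ∃ x ∈ X, ∃ y ∈ X, z = b * x - a * y},
      ∃ n' ∈ {z : ℤ | ∃ x ∈ X, ∃ y ∈ X, z = b * x - a * y}, 1 ≤ n' - n ∧ n' - n ≤ a) := by
  lift b to ℕ using by omega
  lift a to ℕ using by omega
  push_cast at hd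
  have hb' : 1 ≤ b := by exact_mod_cast hb
  have hba' : b ≤ a := by exact_mod_cast hba
  constructor
  · rintro _ ⟨x, -, y, -, rfl⟩
    obtain ⟨x', hx', y', hy', h1, h2⟩ :=
      exists_sub_mem_Ioc X a b a hb' hba' (by omega) le_rfl hd x y
    exact ⟨_, ⟨x', hx', y', hy', rfl⟩, by omega, h2⟩
  · rintro _ ⟨x, -, y, -, rfl⟩
    -- a step back in `aX - bX = -(bX - aX)` is a step forward in `bX - aX`
    obtain ⟨y', hy', x', hx', h1, h2⟩ :=
      exists_sub_mem_Ioc X a b (-1) hb' hba' (by omega) (by omega) hd y x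
    exact ⟨_, ⟨x', hx', y', hy', rfl⟩, by omega, by omega⟩
end

section
/- Let A, A' ⊆ ℤ be semi-periodic modulo g and g' respectively (i.e. A + g ⊆ A and A' + g' ⊆ A'), where g, g' ≥ 1. Then A - A' is fully periodic modulo d = gcd(g, g'), i.e. (A - A') + d = A - A'. -/
/-!
The semiperiods of `S`, the translations `p` with `S + p ⊆ S`, form an additive submonoid.
For `D = A - A'` this submonoid contains `g` and `-g'`. Since `g, g' > 0`, Bézout's identity
can be arranged with natural coefficients in both orders, `m g - n g' = d` and `m' g - n' g' = -d`,
so it contains both `d` and `-d`, which makes `D` fully periodic mod `d`.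
-/

open Pointwise

section Semiperiods

variable {M : Type*}

def semiperiods [AddMonoid M] (S : Set M) : AddSubmonoid M where
  carrier := {p | ∀ x ∈ S, x + p ∈ S}
  zero_mem' := by simp
  add_mem' hp hq x hx := by simpa only [add_assoc] using hq _ (hp x hx)

theorem mem_semiperiods_iff_image_subset [AddMonoid M] {S : Set M} {p : M} :
    p ∈ semiperiods S ↔ (· + p) '' S ⊆ S :=
  Set.image_subset_iff.symm

theorem image_add_eq_of_mem_semiperiods [AddGroup M] {S : Set M} {p : M}
    (hp : p ∈ semiperiods S) (hnp : -p ∈ semiperiods S) : (· + p) '' S = S := by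
  refine (mem_semiperiods_iff_image_subset.mp hp).antisymm fun x hx => ⟨x + -p, hnp x hx, ?_⟩
  simp

variable [AddCommGroup M] {A A' : Set M} {g g' : M}

theorem mem_semiperiods_sub_left (hg : g ∈ semiperiods A) : g ∈ semiperiods (A - A') := by
  rintro _ ⟨x, hx, y, hy, rfl⟩
  exact ⟨x + g, hg x hx, y, hy, (sub_add_eq_add_sub x y g).symm⟩

theorem neg_mem_semiperiods_sub_right (hg' : g' ∈ semiperiods A') :
    -g' ∈ semiperiods (A - A') := by
  rintro _ ⟨x, hx, y, hy, rfl⟩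
  exact ⟨x, hx, y + g', hg' y hy, (sub_add_eq_sub_sub x y g').trans (sub_eq_add_neg _ g')⟩

end Semiperiods

theorem Int.exists_nat_mul_sub_nat_mul_eq_gcd {a b : ℤ} (ha : 0 < a) (hb : 0 < b) :
    ∃ m n : ℕ, (m : ℤ) * a - n * b = a.gcd b := by
  -- shift the Bézout coefficients `(u, v)` to `(u + k b, v - k a)` with `k` large
  set u := a.gcdA b
  set v := a.gcdB b
  set k := |u| + |v|
  have hk : |u| ≤ k ∧ |v| ≤ k := ⟨le_add_of_nonneg_right (abs_nonneg v),
    le_add_of_nonneg_left (abs_nonneg u)⟩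
  have hm : 0 ≤ u + k * b := by nlinarith [neg_abs_le u, abs_nonneg u]
  have hn : 0 ≤ k * a - v := by nlinarith [le_abs_self v, abs_nonneg v]
  refine ⟨(u + k * b).toNat, (k * a - v).toNat, ?_⟩
  rw [Int.toNat_of_nonneg hm, Int.toNat_of_nonneg hn, Int.gcd_eq_gcd_ab]
  ring

theorem difference_fully_periodic (A A' : Set ℤ) (g g' : ℤ) (hg : 1 ≤ g) (hg' : 1 ≤ g')
    (hA : (fun x => x + g) '' A ⊆ A) (hA' : (fun x => x + g') '' A' ⊆ A') :
    (fun x => x + (Int.gcd g g' : ℤ)) '' {z : ℤ | ∃ x ∈ A, ∃ y ∈ A', z = x - y} =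
      {z : ℤ | ∃ x ∈ A, ∃ y ∈ A', z = x - y} := by
  have hD : {z : ℤ | ∃ x ∈ A, ∃ y ∈ A', z = x - y} = A - A' := by
    ext z
    simp [Set.mem_sub, eq_comm]
  have hcomb (m n : ℕ) : (m : ℤ) * g - n * g' ∈ semiperiods (A - A') := by
    have hgD := mem_semiperiods_sub_left (A' := A') (mem_semiperiods_iff_image_subset.mpr hA)
    have hg'D := neg_mem_semiperiods_sub_right (A := A) (mem_semiperiods_iff_image_subset.mpr hA')
    simpa [sub_eq_add_neg] using add_mem (nsmul_mem hgD m) (nsmul_mem hg'D n)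
  obtain ⟨m, n, hmn⟩ := Int.exists_nat_mul_sub_nat_mul_eq_gcd (by omega : 0 < g) (by omega : 0 < g')
  obtain ⟨m', n', hmn'⟩ :=
    Int.exists_nat_mul_sub_nat_mul_eq_gcd (by omega : 0 < g') (by omega : 0 < g)
  rw [Int.gcd_comm] at hmn'
  rw [hD]
  refine image_add_eq_of_mem_semiperiods ?_ ?_
  · simpa [hmn] using hcomb m n
  · convert hcomb n' m' using 1
    linarith
end

section
/- Let g ≥ 1, G = ℤ/gℤ, and X ⊆ G with 0 ∈ X. Let a, b be positive integers with gcd(a,b) = 1. Suppose X is not periodic (the only h ∈ G with X + h = X is h = 0) and aX + bX = aX. Then X ⊆ (g/gcd(g,b))·G. -/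
/-!
Since `0 ∈ X`, `bX ⊆ aX`, so `b` maps the subgroup `H = ⟨X⟩` into `aH`; writing `1 = ua + vb` gives
`H = aH`, and as `H` is finite, multiplication by `a` is injective on `H`. For `x ∈ X` write
`bx = ak` with `k ∈ H`. Then `a(X + k) = aX + bx ⊆ aX`, so injectivity gives `X + k ⊆ X`, hence
`X + k = X`, so `k = 0` by aperiodicity and `bx = 0`, i.e. `x` is a multiple of `g / gcd(g, b)`.
-/

open Set AddSubgroup

variable {G : Type*} [AddCommGroup G] {a b : ℕ}

theorem surjOn_nsmul_closure_of_coprime (hab : a.Coprime b) {X : Set G}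
    (hX : ∀ x ∈ X, ∃ y ∈ X, b • x = a • y) :
    SurjOn (a • · : G → G) (closure X) (closure X) := by
  have hba : (closure X).map (nsmulAddMonoidHom b) ≤ (closure X).map (nsmulAddMonoidHom a) := by
    rw [AddMonoidHom.map_closure, closure_le]
    rintro _ ⟨x, hx, rfl⟩
    obtain ⟨y, hy, hxy⟩ := hX x hx
    exact ⟨y, subset_closure hy, hxy.symm⟩
  obtain ⟨u, v, huv⟩ := hab.isCoprime
  intro h hh
  obtain ⟨k, hk, hbk⟩ := hba ⟨h, hh, rfl⟩
  simp only [nsmulAddMonoidHom_apply] at hbk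
  refine ⟨u • h + v • k, add_mem (zsmul_mem hh u) (zsmul_mem hk v), ?_⟩
  calc a • (u • h + v • k) = u • (a • h) + v • (b • h) := by rw [← hbk]; module
    _ = h := by
      rw [← natCast_zsmul, ← natCast_zsmul, smul_smul, smul_smul, ← add_smul, huv, one_smul]

theorem injOn_nsmul_closure_of_coprime [Finite G] (hab : a.Coprime b) {X : Set G}
    (hX : ∀ x ∈ X, ∃ y ∈ X, b • x = a • y) :
    InjOn (a • · : G → G) (closure X) :=
  ((toFinite _).surjOn_iff_bijOn_of_mapsTo (fun _ hh => nsmul_mem hh a)).mp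
    (surjOn_nsmul_closure_of_coprime hab hX) |>.injOn

theorem nsmul_eq_zero_of_nsmul_add_nsmul_subset_nsmul [Finite G] {X : Set G} (h0 : 0 ∈ X)
    (hab : a.Coprime b) (hnp : ∀ h : G, (· + h) '' X = X → h = 0)
    (hsum : ∀ x ∈ X, ∀ y ∈ X, ∃ z ∈ X, a • x + b • y = a • z) {x : G} (hx : x ∈ X) :
    b • x = 0 := by
  have hbX : ∀ y ∈ X, ∃ z ∈ X, b • y = a • z := fun y hy => by
    simpa using hsum 0 h0 y hy
  obtain ⟨k, hk, hak⟩ := surjOn_nsmul_closure_of_coprime hab hbX (nsmul_mem (subset_closure hx) b)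
  have hshift : MapsTo (· + k) X X := fun y hy => by
    obtain ⟨z, hz, hyxz⟩ := hsum y hy x hx
    have : y + k = z := injOn_nsmul_closure_of_coprime hab hbX
      (add_mem (subset_closure hy) hk) (subset_closure hz) (by simp only [nsmul_add, hak, hyxz])
    simpa [this]
  have hperiod : (· + k) '' X = X :=
    ((toFinite X).injOn_iff_bijOn_of_mapsTo hshift).mp (add_left_injective k).injOn |>.image_eq
  rw [← hak, hnp k hperiod]
  exact nsmul_zero a

theorem ZMod.exists_eq_mul_div_gcd_of_mul_eq_zero {g : ℕ} [NeZero g] {b : ℕ} {x : ZMod g}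
    (hbx : (b : ZMod g) * x = 0) : ∃ w : ZMod g, x = ((g / g.gcd b : ℕ) : ZMod g) * w := by
  have hd : 0 < g.gcd b := Nat.gcd_pos_of_pos_left b (NeZero.pos g)
  have hg : g ∣ b * x.val := by
    rw [← ZMod.natCast_eq_zero_iff, Nat.cast_mul, ZMod.natCast_zmod_val, hbx]
  have : g / g.gcd b ∣ b / g.gcd b * x.val := by
    rw [← Nat.mul_div_right_comm (Nat.gcd_dvd_right g b)]
    exact Nat.div_dvd_div (Nat.gcd_dvd_left g b) hg
  obtain ⟨w, hw⟩ := (Nat.coprime_div_gcd_div_gcd hd).dvd_of_dvd_mul_left this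
  exact ⟨w, by rw [← ZMod.natCast_zmod_val x, hw, Nat.cast_mul]⟩

theorem subset_of_multiples_general (g : ℕ) (hg : 0 < g) (X : Set (ZMod g)) (h0 : (0 : ZMod g) ∈ X)
    (a b : ℕ) (hab : Nat.Coprime a b)
    (hnp : ∀ h : ZMod g, (fun x => x + h) '' X = X → h = 0)
    (heq : {z : ZMod g | ∃ x ∈ X, ∃ y ∈ X, z = (a : ZMod g) * x + (b : ZMod g) * y} =
      {z : ZMod g | ∃ x ∈ X, z = (a : ZMod g) * x}) :
    X ⊆ {z : ZMod g | ∃ w : ZMod g, z = ((g / Nat.gcd g b : ℕ) : ZMod g) * w} := by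
  have : NeZero g := ⟨hg.ne'⟩
  have hsum : ∀ x ∈ X, ∀ y ∈ X, ∃ z ∈ X, a • x + b • y = a • z := fun x hx y hy => by
    obtain ⟨z, hz, hxyz⟩ :
        (a : ZMod g) * x + (b : ZMod g) * y ∈ {z | ∃ x ∈ X, z = (a : ZMod g) * x} :=
      heq ▸ ⟨x, hx, y, hy, rfl⟩
    exact ⟨z, hz, by simpa only [nsmul_eq_mul] using hxyz⟩
  intro x hx
  have hbx : b • x = 0 := nsmul_eq_zero_of_nsmul_add_nsmul_subset_nsmul h0 hab hnp hsum hx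
  rw [nsmul_eq_mul] at hbx
  exact ZMod.exists_eq_mul_div_gcd_of_mul_eq_zero hbx

theorem subset_of_multiples (g : ℕ) (hg : 0 < g) (X : Set (ZMod g)) (h0 : (0 : ZMod g) ∈ X)
    (a b : ℕ) (ha : 0 < a) (hb : 0 < b) (hab : Nat.Coprime a b)
    (hnp : ∀ h : ZMod g, (fun x => x + h) '' X = X → h = 0)
    (heq : {z : ZMod g | ∃ x ∈ X, ∃ y ∈ X, z = (a : ZMod g) * x + (b : ZMod g) * y} =
      {z : ZMod g | ∃ x ∈ X, z = (a : ZMod g) * x}) :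
    X ⊆ {z : ZMod g | ∃ w : ZMod g, z = ((g / Nat.gcd g b : ℕ) : ZMod g) * w} :=
  subset_of_multiples_general g hg X h0 a b hab hnp heq
end

section
/- Let G = ℤ/gℤ, let a, b be coprime positive integers, and let U ⊆ G be any nonempty subset. Then |aU + bU| ≥ |U|. -/
/-!
Let `T` be the `a`-primary torsion subgroup `{x | a ^ k • x = 0 for some k}` of `G = ℤ/gℤ`
(in fact of any abelian group). Since `b` is coprime to `a`, multiplication by `b` is injective
on `T`, while multiplication by `a` is injective on `G ⧸ T`. Let `U₀` be a largest fibre of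
`U → G ⧸ T`, over the class `c₀`, and pick `s_c ∈ U` in each class `c` met by `U`. The sums
`a • s_c + b • u` with `u ∈ U₀` are pairwise distinct: modulo `T` they equal `a • c + b • c₀`,
which determines `c`, and then `b • u` determines `u` within its coset. So
`|aU + bU|` is at least `|U₀|` times the number of classes met by `U`, hence at least `|U|`.
-/

open Finset Submodule
variable {G : Type*} [AddCommGroup G]

theorem mem_torsion'_powers_natCast_iff {a : ℕ} {x : G} :
    x ∈ torsion' ℤ G (Submonoid.powers (a : ℤ)) ↔ ∃ k : ℕ, a ^ k • x = 0 := by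
  simp only [mem_torsion'_iff, Subtype.exists, Submonoid.mk_smul, Submonoid.mem_powers_iff,
    exists_prop, exists_exists_eq_and, ← Nat.cast_pow, natCast_zsmul]

theorem mem_torsion'_powers_of_nsmul_mem {a : ℕ} {x : G}
    (hx : a • x ∈ torsion' ℤ G (Submonoid.powers (a : ℤ))) :
    x ∈ torsion' ℤ G (Submonoid.powers (a : ℤ)) := by
  obtain ⟨k, hk⟩ := mem_torsion'_powers_natCast_iff.mp hx
  exact mem_torsion'_powers_natCast_iff.mpr ⟨k + 1, by rwa [pow_succ, mul_nsmul']⟩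

theorem eq_zero_of_mem_torsion'_powers_of_nsmul_eq_zero {a b : ℕ} (hab : a.Coprime b) {x : G}
    (hx : x ∈ torsion' ℤ G (Submonoid.powers (a : ℤ))) (hbx : b • x = 0) : x = 0 := by
  obtain ⟨k, hk⟩ := mem_torsion'_powers_natCast_iff.mp hx
  have h : addOrderOf x = 1 := Nat.eq_one_of_dvd_coprimes (hab.pow_left k)
    (addOrderOf_dvd_of_nsmul_eq_zero hk) (addOrderOf_dvd_of_nsmul_eq_zero hbx)
  exact AddMonoid.addOrderOf_eq_one_iff.mp h

theorem card_le_card_image₂_nsmul_add_nsmul_of_addMonoidHom {Q : Type*} [AddCommGroup Q] [DecidableEq G]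
    (π : G →+ Q) {a b : ℕ} (ha : ∀ q : Q, a • q = 0 → q = 0)
    (hb : ∀ x, π x = 0 → b • x = 0 → x = 0) (U : Finset G) :
    #U ≤ #(image₂ (fun x y => a • x + b • y) U U) := by
  classical
  rcases U.eq_empty_or_nonempty with rfl | hU
  · simp
  obtain ⟨c₀, -, hc₀⟩ :=
    (U.image π).exists_max_image (fun c => #{u ∈ U | π u = c}) (hU.image π)
  set s := Function.invFunOn π U
  have hs : ∀ c ∈ U.image π, s c ∈ U ∧ π (s c) = c := fun c hc => by
    obtain ⟨u, hu, rfl⟩ := mem_image.mp hc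
    exact ⟨Function.invFunOn_mem ⟨u, hu, rfl⟩, Function.invFunOn_eq ⟨u, hu, rfl⟩⟩
  calc #U ≤ #{u ∈ U | π u = c₀} * #(U.image π) := card_le_mul_card_image U _ hc₀
    _ = #(U.image π ×ˢ {u ∈ U | π u = c₀}) := by rw [card_product, mul_comm]
    _ ≤ _ := card_le_card_of_injOn (fun p => a • s p.1 + b • p.2) ?_ ?_
  · rintro ⟨c, u⟩ h
    simp only [coe_product, Set.mem_prod, mem_coe, mem_filter] at h
    exact mem_image₂_of_mem (hs c h.1).1 h.2.1
  · rintro ⟨c₁, u₁⟩ h₁ ⟨c₂, u₂⟩ h₂ heq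
    simp only [coe_product, Set.mem_prod, mem_coe, mem_filter] at h₁ h₂ heq
    have hc : c₁ = c₂ := by
      have h := congrArg π heq
      simp only [map_add, map_nsmul, (hs _ h₁.1).2, (hs _ h₂.1).2, h₁.2.2, h₂.2.2,
        add_left_inj] at h
      exact sub_eq_zero.mp (ha _ (by rw [smul_sub, h, sub_self]))
    subst hc
    have hu : b • u₁ = b • u₂ := add_left_cancel heq
    have hπ : π (u₁ - u₂) = 0 := by rw [map_sub, h₁.2.2, h₂.2.2, sub_self]
    rw [sub_eq_zero.mp (hb _ hπ (by rw [smul_sub, hu, sub_self]))]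

theorem card_le_card_image₂_nsmul_add_nsmul [DecidableEq G] {a b : ℕ} (hab : a.Coprime b)
    (U : Finset G) : #U ≤ #(image₂ (fun x y => a • x + b • y) U U) := by
  set T := torsion' ℤ G (Submonoid.powers (a : ℤ))
  refine card_le_card_image₂_nsmul_add_nsmul_of_addMonoidHom T.mkQ.toAddMonoidHom (fun q hq => ?_)
    (fun x hx => eq_zero_of_mem_torsion'_powers_of_nsmul_eq_zero hab
      ((Quotient.mk_eq_zero T).mp hx)) U
  induction q using Quotient.induction_on with | _ x => ?_
  exact (Quotient.mk_eq_zero T).mpr (mem_torsion'_powers_of_nsmul_mem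
    ((Quotient.mk_eq_zero T).mp (by simpa [← Quotient.mk_smul] using hq)))

theorem card_linear_image_ge_general (g : ℕ)
    (a b : ℕ) (hab : Nat.Coprime a b)
    (U : Finset (ZMod g)) :
    U.card ≤ (Finset.image₂ (fun x y => (a : ZMod g) * x + (b : ZMod g) * y) U U).card := by
  simpa only [nsmul_eq_mul] using card_le_card_image₂_nsmul_add_nsmul hab U

theorem card_linear_image_ge (g : ℕ) [NeZero g]
    (a b : ℕ) (ha : 0 < a) (hb : 0 < b) (hab : Nat.Coprime a b)
    (U : Finset (ZMod g)) (hU : U.Nonempty) :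
    U.card ≤ (Finset.image₂ (fun x y => (a : ZMod g) * x + (b : ZMod g) * y) U U).card :=
  card_linear_image_ge_general g a b hab U
end

section
/- Let X, Y ⊆ ℕ and α a real number. Suppose the fractional parts {αx}, x ∈ X, are dense in (1-β,1) ∪ (0,β) and the fractional parts {αy}, y ∈ Y, are dense in (1-γ,1) ∪ (0,γ), for some β, γ ∈ (0,1/2]. Then the fractional parts {αz}, z ∈ X + Y, are dense in (1-μ,1) ∪ (0,μ) where μ = min(β + γ, 1/2). -/
/-!
Let `A_S` be the closure of `{αn}`, `n ∈ S`. As `{α(x + y)} = {{αx} + {αy}}` and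
`(s, t) ↦ {s + t}` is continuous wherever `s + t ∉ ℤ`, we have `{a + b} ∈ A_{X+Y}` whenever
`a ∈ A_X`, `b ∈ A_Y` and `a + b ∉ ℤ`. A point `u ∈ (0, μ)` is `a + b` with `a ∈ (0, β)`,
`b ∈ (0, γ)`; a point `u ∈ (1 - μ, 1)` is `{(1 - a) + (1 - b)}` where `1 - u = a + b` is split
in the same way.
-/

open Set Int
open scoped Pointwise

def fractClosure (α : ℝ) (S : Set ℕ) : Set ℝ :=
  closure ((fun n : ℕ => fract (α * n)) '' S)

theorem mem_fractClosure_iff {α u : ℝ} {S : Set ℕ} :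
    u ∈ fractClosure α S ↔ ∀ ε > 0, ∃ n ∈ S, |fract (α * n) - u| < ε := by
  simp only [fractClosure, Metric.mem_closure_iff, exists_mem_image, Real.dist_eq, abs_sub_comm]

theorem fract_fract_add_fract {R : Type*} [Ring R] [LinearOrder R] [IsStrictOrderedRing R]
    [FloorRing R] (a b : R) : fract (fract a + fract b) = fract (a + b) := by
  rw [show fract a + fract b = a + b - ((⌊a⌋ + ⌊b⌋ : ℤ) : R) by
    rw [← self_sub_floor a, ← self_sub_floor b]; push_cast; abel, fract_sub_intCast]

theorem fract_add_mem_fractClosure_add {α a b : ℝ} {X Y : Set ℕ}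
    (ha : a ∈ fractClosure α X) (hb : b ∈ fractClosure α Y) (hab : 0 < fract (a + b)) :
    fract (a + b) ∈ fractClosure α (X + Y) := by
  let f : ℕ → ℝ := fun n => fract (α * n)
  let g : ℝ × ℝ → ℝ := fun p => fract (p.1 + p.2)
  have hg : ContinuousAt g (a, b) :=
    ContinuousAt.comp (x := (a, b)) (f := fun p : ℝ × ℝ => p.1 + p.2) (g := fract)
      (continuousAt_fract (fract_pos.1 hab)) continuous_add.continuousAt
  have hsub : g '' ((f '' X) ×ˢ (f '' Y)) ⊆ f '' (X + Y) := by
    rintro _ ⟨⟨_, _⟩, ⟨⟨x, hx, rfl⟩, ⟨y, hy, rfl⟩⟩, rfl⟩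
    refine ⟨x + y, Set.add_mem_add hx hy, ?_⟩
    simp only [f, g, fract_fract_add_fract, Nat.cast_add, mul_add]
  refine closure_mono hsub (mem_closure_image hg ?_)
  rw [closure_prod_eq]
  exact ⟨ha, hb⟩

theorem exists_mem_Ioo_add_eq {β γ u : ℝ} (hβ : 0 < β) (hγ : 0 < γ) (hu : u ∈ Ioo 0 (β + γ)) :
    ∃ a ∈ Ioo 0 β, ∃ b ∈ Ioo 0 γ, a + b = u := by
  have hβγ : 0 < β + γ := by positivity
  refine ⟨u * β / (β + γ), ⟨by have := hu.1; positivity, ?_⟩,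
    u * γ / (β + γ), ⟨by have := hu.1; positivity, ?_⟩, by field_simp⟩
  all_goals
    rw [div_lt_iff₀ hβγ]
    nlinarith [hu.2]

theorem fract_dense_sumset (X Y : Set ℕ) (α β γ : ℝ)
    (hβ : β ∈ Set.Ioc (0 : ℝ) (1 / 2)) (hγ : γ ∈ Set.Ioc (0 : ℝ) (1 / 2))
    (hX : ∀ u ∈ Set.Ioo (1 - β) 1 ∪ Set.Ioo 0 β, ∀ ε > (0 : ℝ),
      ∃ x ∈ X, |Int.fract (α * x) - u| < ε)
    (hY : ∀ u ∈ Set.Ioo (1 - γ) 1 ∪ Set.Ioo 0 γ, ∀ ε > (0 : ℝ),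
      ∃ y ∈ Y, |Int.fract (α * y) - u| < ε) :
    ∀ u ∈ Set.Ioo (1 - min (β + γ) (1 / 2)) 1 ∪ Set.Ioo 0 (min (β + γ) (1 / 2)),
      ∀ ε > (0 : ℝ), ∃ z ∈ {n : ℕ | ∃ x ∈ X, ∃ y ∈ Y, n = x + y},
        |Int.fract (α * z) - u| < ε := by
  simp_rw [← mem_fractClosure_iff] at hX hY
  have hsumset : {n | ∃ x ∈ X, ∃ y ∈ Y, n = x + y} = X + Y := by
    simp only [← image2_add, image2, eq_comm]
  intro u hu
  rw [← mem_fractClosure_iff, hsumset]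
  have hμ := min_le_right (β + γ) (1 / 2 : ℝ)
  have hμ' := min_le_left (β + γ) (1 / 2 : ℝ)
  rcases hu with ⟨hu₀, hu₁⟩ | ⟨hu₀, hu₁⟩
  · obtain ⟨a, ha, b, hb, hab⟩ :=
      exists_mem_Ioo_add_eq hβ.1 hγ.1 (u := 1 - u) ⟨by linarith, by linarith⟩
    have hfract : fract ((1 - a) + (1 - b)) = u := by
      rw [show (1 - a) + (1 - b) = u + 1 by linarith, fract_add_one,
        fract_eq_self.2 ⟨by linarith, hu₁⟩]
    rw [← hfract]
    exact fract_add_mem_fractClosure_add (hX _ (Or.inl ⟨by linarith [ha.2], by linarith [ha.1]⟩))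
      (hY _ (Or.inl ⟨by linarith [hb.2], by linarith [hb.1]⟩)) (by linarith)
  · obtain ⟨a, ha, b, hb, rfl⟩ := exists_mem_Ioo_add_eq hβ.1 hγ.1 ⟨hu₀, by linarith⟩
    have hfract : fract (a + b) = a + b := fract_eq_self.2 ⟨hu₀.le, by linarith⟩
    rw [← hfract]
    exact fract_add_mem_fractClosure_add (hX _ (Or.inr ha)) (hY _ (Or.inr hb)) (by linarith)
end
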